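/- arXiv:1601.00873 — 4 statements merged into one kernel-verified Lean document; each statement's English description precedes it below -/
import Mathlib

section
/- Let R > 0, q > 0, b > 0, p > 0 and let f, Φ : ℝ → ℝ be differentiable at γ with f(γ) > 0, Φ(γ) < 1, f'(γ) > 0 and Φ'(γ) < 0. Then the function u(γ) = R q (1 − Φ(γ)) / ( b + p q (1 − Φ(γ))/f(γ) ) has strictly positive derivative at γ; i.e., the cross-layer energy-efficiency is strictly increasing in the SINR at such points. -/
/-! Dividing numerator and denominator by the success probability `s = 1 - Φ` writes the
efficiency as `R q / (b / s + p q / f)`. Both summands of the denominator are positive and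
strictly decreasing in `γ`, because `s` and `f` are positive and increasing, so the efficiency
increases. -/

open Filter Topology

section ConstDiv

variable {g : ℝ → ℝ} {c x : ℝ}

theorem deriv_const_div_neg_of_deriv_pos (hc : 0 < c) (hg : DifferentiableAt ℝ g x)
    (hgx : g x ≠ 0) (hg' : 0 < deriv g x) : deriv (fun y => c / g y) x < 0 := by
  rw [deriv_const_div c hg hgx, neg_mul, neg_div, neg_neg_iff_pos]
  positivity

theorem deriv_const_div_pos_of_deriv_neg (hc : 0 < c) (hg : DifferentiableAt ℝ g x)
    (hgx : g x ≠ 0) (hg' : deriv g x < 0) : 0 < deriv (fun y => c / g y) x := by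
  rw [deriv_const_div c hg hgx, neg_mul, neg_div, neg_pos]
  exact div_neg_of_neg_of_pos (mul_neg_of_pos_of_neg hc hg') (pow_two_pos_of_ne_zero hgx)

end ConstDiv

theorem mul_div_add_mul_div_eq_div_div_add_div (α b β f : ℝ) {s : ℝ} (hs : s ≠ 0) :
    α * s / (b + β * s / f) = α / (b / s + β / f) := by
  have hden : b + β * s / f = s * (b / s + β / f) := by
    field_simp
  rw [hden, mul_comm α s, mul_div_mul_left _ _ hs]

theorem deriv_mul_div_add_mul_div_pos {s f : ℝ → ℝ} {α b β γ : ℝ}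
    (hα : 0 < α) (hb : 0 < b) (hβ : 0 < β)
    (hs : DifferentiableAt ℝ s γ) (hf : DifferentiableAt ℝ f γ)
    (hspos : 0 < s γ) (hfpos : 0 < f γ) (hs' : 0 < deriv s γ) (hf' : 0 < deriv f γ) :
    0 < deriv (fun x => α * s x / (b + β * s x / f x)) γ := by
  have hrecip : (fun x => α * s x / (b + β * s x / f x)) =ᶠ[𝓝 γ]
      fun x => α / (b / s x + β / f x) :=
    (hs.continuousAt.eventually_ne hspos.ne').mono fun x hx =>
      mul_div_add_mul_div_eq_div_div_add_div α b β (f x) hx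
  have hbs : DifferentiableAt ℝ (fun x => b / s x) γ :=
    (differentiableAt_const b).fun_div hs hspos.ne'
  have hβf : DifferentiableAt ℝ (fun x => β / f x) γ :=
    (differentiableAt_const β).fun_div hf hfpos.ne'
  have hden_anti : deriv (fun x => b / s x + β / f x) γ < 0 := by
    rw [deriv_fun_add hbs hβf]
    exact add_neg (deriv_const_div_neg_of_deriv_pos hb hs hspos.ne' hs')
      (deriv_const_div_neg_of_deriv_pos hβ hf hfpos.ne' hf')
  rw [hrecip.deriv_eq]
  exact deriv_const_div_pos_of_deriv_neg hα (hbs.add hβf) (by positivity) hden_anti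

/-- The cross-layer energy-efficiency `u(γ) = Rq(1 - Φ(γ))/(b + pq(1 - Φ(γ))/f(γ))` is
strictly increasing in the SINR at any point `γ` where `f(γ) > 0`, `Φ(γ) < 1`,
`f'(γ) > 0` and `Φ'(γ) < 0`. -/
theorem cross_layer_ee_increasing_in_sinr (R q b p : ℝ)
    (hR : 0 < R) (hq : 0 < q) (hb : 0 < b) (hp : 0 < p)
    (f Φ : ℝ → ℝ) (γ : ℝ)
    (hf : DifferentiableAt ℝ f γ) (hΦ : DifferentiableAt ℝ Φ γ)
    (hfpos : 0 < f γ) (hΦlt : Φ γ < 1)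
    (hf' : 0 < deriv f γ) (hΦ' : deriv Φ γ < 0) :
    0 < deriv (fun x : ℝ => R * q * (1 - Φ x) / (b + p * q * (1 - Φ x) / f x)) γ := by
  have hs : DifferentiableAt ℝ (fun x => 1 - Φ x) γ := (differentiableAt_const 1).sub hΦ
  have hs' : 0 < deriv (fun x => 1 - Φ x) γ := by
    rw [deriv_const_sub]
    exact neg_pos.mpr hΦ'
  exact deriv_mul_div_add_mul_div_pos (s := fun x => 1 - Φ x) (mul_pos hR hq) hb (mul_pos hp hq)
    hs hf (sub_pos.mpr hΦlt) hfpos hs' hf'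
end

section
/- Let N ≥ 2, c > 0, q ∈ (0,1), K ≥ 1 an integer, R > 0, b > 0, σ² > 0, and channel gains h₁,…,h_N > 0. Define f(γ) = e^{−c/γ}, ρ(γ) = q(1 − f(γ))/((1 − q)f(γ)), Π_K(ρ) = ρ^K/Σ_{j=0}^{K} ρ^j, Φ(γ) = (1 − f(γ))Π_K(ρ(γ)), γ_i(p) = p_i h_i/(σ² + Σ_{j≠i} p_j h_j), and χ_i(p) = R q (1 − Φ(γ_i(p))) / ( b + p_i q (1 − Φ(γ_i(p)))/f(γ_i(p)) ). Then for fixed p_i > 0 and fixed powers of the users other than i and j, the map p_j ↦ χ_i(p) is strictly decreasing on [0,∞) for every j ≠ i. -/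
/-!
A larger opponent power `p_j` lowers the SINR `γ_i`, so it suffices that `χ_i` is strictly
increasing in the SINR. As `γ` grows, `f(γ)` increases, so the traffic ratio `ρ = q(1 - f)/((1 - q)f)`
decreases; for `K ≥ 1` the full-buffer probability `Π_K` is increasing in `ρ`, so the loss
probability `Φ = (1 - f) Π_K(ρ)` is a product of two nonnegative decreasing factors and decreases.
Finally `χ = Rq / (b/(1 - Φ) + p_i q/f)`, and both terms of the denominator decrease.
-/

open Real Set Finset Function

theorem StrictAntiOn.mul_of_nonneg {α : Type*} [Preorder α] {f g : α → ℝ} {s : Set α}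
    (hf : StrictAntiOn f s) (hg : StrictAntiOn g s) (hf0 : ∀ x ∈ s, 0 ≤ f x)
    (hg0 : ∀ x ∈ s, 0 ≤ g x) : StrictAntiOn (f * g) s :=
  fun _ hx _ hy hxy => mul_lt_mul'' (hf hx hy hxy) (hg hx hy hxy) (hf0 _ hy) (hg0 _ hy)

theorem strictMonoOn_mul_div_add_mul_div {α : Type*} [Preorder α] {A F : α → ℝ} {s : Set α}
    {a b p : ℝ} (ha : 0 < a) (hb : 0 < b) (hp : 0 < p) (hA : StrictMonoOn A s)
    (hF : StrictMonoOn F s) (hA0 : ∀ x ∈ s, 0 < A x) (hF0 : ∀ x ∈ s, 0 < F x) :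
    StrictMonoOn (fun x => a * A x / (b + p * A x / F x)) s := by
  have hrecip : ∀ x ∈ s, a * A x / (b + p * A x / F x) = a / (b / A x + p / F x) := by
    intro x hx
    have := hA0 x hx
    have := hF0 x hx
    field_simp
  intro x hx y hy hxy
  have := hA0 y hy
  have := hF0 y hy
  simp only [hrecip x hx, hrecip y hy]
  refine div_lt_div_of_pos_left ha (by positivity) (add_lt_add ?_ ?_)
  · exact div_lt_div_of_pos_left hb (hA0 x hx) (hA hx hy hxy)
  · exact div_lt_div_of_pos_left hp (hF0 x hx) (hF hx hy hxy)

theorem Finset.sum_update_mul_of_mem {ι : Type*} [DecidableEq ι] {P h : ι → ℝ} {x : ℝ} {j : ι}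
    {s : Finset ι} (hj : j ∈ s) :
    ∑ k ∈ s, update P j x k * h k = x * h j + ∑ k ∈ s.erase j, P k * h k := by
  rw [← add_sum_erase _ _ hj, update_self]
  congr 1
  exact sum_congr rfl fun k hk => by rw [update_of_ne (ne_of_mem_erase hk)]

namespace CrossLayerEE

noncomputable section

def successRate (c γ : ℝ) : ℝ := exp (-c / γ)

def trafficRatio (c q γ : ℝ) : ℝ := q * (1 - successRate c γ) / ((1 - q) * successRate c γ)

/-- Stationary probability that the size-`K` buffer of a birth–death chain with ratio `r` is full. -/
def fullBufferProb (K : ℕ) (r : ℝ) : ℝ := r ^ K / ∑ m ∈ range (K + 1), r ^ m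

def lossProb (c q : ℝ) (K : ℕ) (γ : ℝ) : ℝ :=
  (1 - successRate c γ) * fullBufferProb K (trafficRatio c q γ)

def sinr {ι : Type*} [Fintype ι] [DecidableEq ι] (h : ι → ℝ) (σ2 : ℝ) (P : ι → ℝ) (i : ι) : ℝ :=
  P i * h i / (σ2 + ∑ j ∈ univ.erase i, P j * h j)

end

theorem fullBufferProb_nonneg (K : ℕ) {r : ℝ} (hr : 0 ≤ r) : 0 ≤ fullBufferProb K r :=
  div_nonneg (pow_nonneg hr K) (geom_sum_pos hr K.succ_ne_zero).le

theorem fullBufferProb_le_one (K : ℕ) {r : ℝ} (hr : 0 ≤ r) : fullBufferProb K r ≤ 1 :=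
  div_le_one_of_le₀ (single_le_sum (fun m _ => pow_nonneg hr m) (self_mem_range_succ K))
    (geom_sum_pos hr K.succ_ne_zero).le

theorem strictMonoOn_fullBufferProb {K : ℕ} (hK : K ≠ 0) :
    StrictMonoOn (fullBufferProb K) (Ici 0) := by
  intro r (hr : 0 ≤ r) s (hs : 0 ≤ s) hrs
  rw [fullBufferProb, fullBufferProb, div_lt_div_iff₀ (geom_sum_pos hr K.succ_ne_zero)
    (geom_sum_pos hs K.succ_ne_zero), mul_sum, mul_sum]
  refine sum_lt_sum (fun m hm => ?_) ⟨0, by simp, by simpa using pow_lt_pow_left₀ hrs hr hK⟩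
  have hmK : m ≤ K := Nat.lt_succ_iff.mp (mem_range.mp hm)
  calc r ^ K * s ^ m = r ^ m * r ^ (K - m) * s ^ m := by rw [pow_mul_pow_sub _ hmK]
    _ ≤ r ^ m * s ^ (K - m) * s ^ m := by gcongr
    _ = s ^ K * r ^ m := by rw [← pow_mul_pow_sub s hmK]; ring

theorem successRate_pos (c γ : ℝ) : 0 < successRate c γ := exp_pos _

theorem successRate_lt_one {c γ : ℝ} (hc : 0 < c) (hγ : 0 < γ) : successRate c γ < 1 :=
  exp_lt_one_iff.mpr (div_neg_of_neg_of_pos (neg_neg_of_pos hc) hγ)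

theorem strictMonoOn_successRate {c : ℝ} (hc : 0 < c) : StrictMonoOn (successRate c) (Ioi 0) := by
  intro x (hx : 0 < x) y _ hxy
  refine exp_lt_exp.mpr ?_
  rw [neg_div, neg_div, neg_lt_neg_iff]
  exact div_lt_div_of_pos_left hc hx hxy

theorem strictAntiOn_odds {q : ℝ} (hq0 : 0 < q) (hq1 : q < 1) :
    StrictAntiOn (fun t => q * (1 - t) / ((1 - q) * t)) (Ioi 0) := by
  intro s (hs : 0 < s) t (ht : 0 < t) hst
  rw [div_lt_div_iff₀ (by nlinarith) (by nlinarith)]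
  nlinarith [mul_pos (mul_pos hq0 (sub_pos.2 hq1)) (sub_pos.2 hst)]

section Traffic

variable {c q : ℝ} (hc : 0 < c) (hq0 : 0 < q) (hq1 : q < 1)
include hc hq0 hq1

theorem trafficRatio_pos {γ : ℝ} (hγ : 0 < γ) : 0 < trafficRatio c q γ :=
  div_pos (mul_pos hq0 (sub_pos.2 (successRate_lt_one hc hγ)))
    (mul_pos (sub_pos.2 hq1) (successRate_pos c γ))

theorem strictAntiOn_trafficRatio : StrictAntiOn (trafficRatio c q) (Ioi 0) :=
  (strictAntiOn_odds hq0 hq1).comp_strictMonoOn (strictMonoOn_successRate hc)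
    fun γ _ => successRate_pos c γ

theorem lossProb_lt_one (K : ℕ) {γ : ℝ} (hγ : 0 < γ) : lossProb c q K γ < 1 :=
  mul_lt_one_of_nonneg_of_lt_one_left (sub_nonneg.2 (successRate_lt_one hc hγ).le)
    (sub_lt_self 1 (successRate_pos c γ))
    (fullBufferProb_le_one K (trafficRatio_pos hc hq0 hq1 hγ).le)

theorem strictAntiOn_lossProb {K : ℕ} (hK : K ≠ 0) : StrictAntiOn (lossProb c q K) (Ioi 0) := by
  have hfail : StrictAntiOn (fun γ => 1 - successRate c γ) (Ioi 0) :=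
    fun x hx y hy hxy => sub_lt_sub_left (strictMonoOn_successRate hc hx hy hxy) 1
  have hfull : StrictAntiOn (fullBufferProb K ∘ trafficRatio c q) (Ioi 0) :=
    (strictMonoOn_fullBufferProb hK).comp_strictAntiOn (strictAntiOn_trafficRatio hc hq0 hq1)
      fun γ hγ => (trafficRatio_pos hc hq0 hq1 hγ).le
  exact hfail.mul_of_nonneg hfull (fun γ hγ => sub_nonneg.2 (successRate_lt_one hc hγ).le)
    fun γ hγ => fullBufferProb_nonneg K (trafficRatio_pos hc hq0 hq1 hγ).le

theorem strictMonoOn_efficiency {K : ℕ} (hK : K ≠ 0) {R b p : ℝ} (hR : 0 < R) (hb : 0 < b)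
    (hp : 0 < p) :
    StrictMonoOn (fun γ => R * q * (1 - lossProb c q K γ) /
      (b + p * q * (1 - lossProb c q K γ) / successRate c γ)) (Ioi 0) :=
  strictMonoOn_mul_div_add_mul_div (mul_pos hR hq0) hb (mul_pos hp hq0)
    (fun _ hx _ hy hxy => sub_lt_sub_left (strictAntiOn_lossProb hc hq0 hq1 hK hx hy hxy) 1)
    (strictMonoOn_successRate hc) (fun _ hγ => sub_pos.2 (lossProb_lt_one hc hq0 hq1 K hγ))
    fun γ _ => successRate_pos c γ

end Traffic

section Sinr

variable {ι : Type*} [Fintype ι] [DecidableEq ι] {h P : ι → ℝ} {σ2 x : ℝ} {i j : ι}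

theorem sinr_update (hji : j ≠ i) :
    sinr h σ2 (update P j x) i =
      P i * h i / (σ2 + x * h j + ∑ k ∈ (univ.erase i).erase j, P k * h k) := by
  rw [sinr, sum_update_mul_of_mem (mem_erase.2 ⟨hji, mem_univ j⟩), update_of_ne hji.symm,
    add_assoc]

variable (hh : ∀ k, 0 < h k) (hσ : 0 < σ2) (hP : ∀ k, 0 ≤ P k) (hPi : 0 < P i) (hji : j ≠ i)
include hh hσ hP hPi hji

theorem sinr_update_pos (hx : 0 ≤ x) : 0 < sinr h σ2 (update P j x) i := by
  have := sum_nonneg fun k (_ : k ∈ (univ.erase i).erase j) => mul_nonneg (hP k) (hh k).le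
  have := hh i
  have := hh j
  rw [sinr_update hji]
  positivity

theorem strictAntiOn_sinr_update : StrictAntiOn (fun x => sinr h σ2 (update P j x) i) (Ici 0) := by
  intro x (hx : 0 ≤ x) y (hy : 0 ≤ y) hxy
  have := sum_nonneg fun k (_ : k ∈ (univ.erase i).erase j) => mul_nonneg (hP k) (hh k).le
  have := hh i
  have := hh j
  simp only [sinr_update hji]
  exact div_lt_div_of_pos_left (by positivity) (by positivity) (by gcongr)

end Sinr

end CrossLayerEE

open CrossLayerEE in
theorem cross_layer_ee_decreasing_in_opponent_power_general
    (N : ℕ) (c : ℝ) (hc : 0 < c)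
    (q : ℝ) (hq0 : 0 < q) (hq1 : q < 1) (K : ℕ) (hK : 1 ≤ K)
    (R b σ2 : ℝ) (hR : 0 < R) (hb : 0 < b) (hσ : 0 < σ2)
    (h : Fin N → ℝ) (hh : ∀ i, 0 < h i)
    (f ρ PiK Φ : ℝ → ℝ)
    (hf : ∀ γ : ℝ, f γ = Real.exp (-c / γ))
    (hρ : ∀ γ : ℝ, ρ γ = q * (1 - f γ) / ((1 - q) * f γ))
    (hPi : ∀ r : ℝ, PiK r = r ^ K / ∑ m ∈ Finset.range (K + 1), r ^ m)
    (hΦ : ∀ γ : ℝ, Φ γ = (1 - f γ) * PiK (ρ γ))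
    (γfun : (Fin N → ℝ) → Fin N → ℝ)
    (hγ : ∀ (P : Fin N → ℝ) (i : Fin N),
      γfun P i = P i * h i / (σ2 + ∑ j ∈ Finset.univ.erase i, P j * h j))
    (χ : (Fin N → ℝ) → Fin N → ℝ)
    (hχ : ∀ (P : Fin N → ℝ) (i : Fin N),
      χ P i = R * q * (1 - Φ (γfun P i)) /
        (b + P i * q * (1 - Φ (γfun P i)) / f (γfun P i)))
    (p : Fin N → ℝ) (hp : ∀ k, 0 ≤ p k)
    (i j : Fin N) (hij : j ≠ i) (hpi : 0 < p i) :
    StrictAntiOn (fun x : ℝ => χ (Function.update p j x) i) (Set.Ici 0) := by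
  obtain rfl : f = successRate c := funext hf
  obtain rfl : ρ = trafficRatio c q := funext hρ
  obtain rfl : PiK = fullBufferProb K := funext hPi
  obtain rfl : Φ = lossProb c q K := funext hΦ
  obtain rfl : γfun = sinr h σ2 := funext₂ hγ
  have hχ_update : (fun x : ℝ => χ (update p j x) i) = (fun γ => R * q * (1 - lossProb c q K γ) /
      (b + p i * q * (1 - lossProb c q K γ) / successRate c γ)) ∘
        fun x => sinr h σ2 (update p j x) i := by
    funext x
    rw [comp_apply, hχ, update_of_ne hij.symm]
  rw [hχ_update]
  exact (strictMonoOn_efficiency hc hq0 hq1 (by omega) hR hb hpi).comp_strictAntiOn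
    (strictAntiOn_sinr_update hh hσ hp hpi hij) fun _ hx => sinr_update_pos hh hσ hp hpi hij hx

/-- In the cross-layer MAC model, user `i`'s energy-efficiency
`χ_i(p) = Rq(1 - Φ(γ_i(p)))/(b + p_i q(1 - Φ(γ_i(p)))/f(γ_i(p)))` is, for fixed own power
`p_i > 0` and fixed powers of the other users, strictly decreasing in each opponent's power
`p_j` on `[0, ∞)`. -/
theorem cross_layer_ee_decreasing_in_opponent_power
    (N : ℕ) (hN : 2 ≤ N) (c : ℝ) (hc : 0 < c)
    (q : ℝ) (hq0 : 0 < q) (hq1 : q < 1) (K : ℕ) (hK : 1 ≤ K)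
    (R b σ2 : ℝ) (hR : 0 < R) (hb : 0 < b) (hσ : 0 < σ2)
    (h : Fin N → ℝ) (hh : ∀ i, 0 < h i)
    (f ρ PiK Φ : ℝ → ℝ)
    (hf : ∀ γ : ℝ, f γ = Real.exp (-c / γ))
    (hρ : ∀ γ : ℝ, ρ γ = q * (1 - f γ) / ((1 - q) * f γ))
    (hPi : ∀ r : ℝ, PiK r = r ^ K / ∑ m ∈ Finset.range (K + 1), r ^ m)
    (hΦ : ∀ γ : ℝ, Φ γ = (1 - f γ) * PiK (ρ γ))
    (γfun : (Fin N → ℝ) → Fin N → ℝ)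
    (hγ : ∀ (P : Fin N → ℝ) (i : Fin N),
      γfun P i = P i * h i / (σ2 + ∑ j ∈ Finset.univ.erase i, P j * h j))
    (χ : (Fin N → ℝ) → Fin N → ℝ)
    (hχ : ∀ (P : Fin N → ℝ) (i : Fin N),
      χ P i = R * q * (1 - Φ (γfun P i)) /
        (b + P i * q * (1 - Φ (γfun P i)) / f (γfun P i)))
    (p : Fin N → ℝ) (hp : ∀ k, 0 ≤ p k)
    (i j : Fin N) (hij : j ≠ i) (hpi : 0 < p i) :
    StrictAntiOn (fun x : ℝ => χ (Function.update p j x) i) (Set.Ici 0) :=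
  cross_layer_ee_decreasing_in_opponent_power_general N c hc q hq0 hq1 K hK R b σ2 hR hb hσ h hh f ρ
    PiK Φ hf hρ hPi hΦ γfun hγ χ hχ p hp i j hij hpi
end

section
/- With the same model as above (f(γ) = e^{−c/γ}, Φ(γ) = (1 − f(γ))Π_K(ρ(γ)), γ_i(p) = p_i h_i/(σ² + Σ_{j≠i} p_j h_j), χ_i(p) = Rq(1 − Φ(γ_i(p)))/(b + p_i q(1 − Φ(γ_i(p)))/f(γ_i(p))), with c>0, q∈(0,1), K≥1, R>0, b>0, σ²>0, h_i>0), for every power profile p with p_i > 0 one has χ_i(p₁,…,p_N) ≤ χ_i evaluated at the profile in which user i keeps power p_i and all other users transmit with power 0; the inequality is strict whenever Σ_{j≠i} p_j h_j > 0. In words: for a fixed own power, user i's energy-efficiency is maximal when all opponents are silent. -/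
private lemma Pi_mono_aux (K : ℕ) (hK : 1 ≤ K) {r s : ℝ} (hr : 0 < r) (hrs : r < s) :
    r ^ K / ∑ m ∈ Finset.range (K + 1), r ^ m
      < s ^ K / ∑ m ∈ Finset.range (K + 1), s ^ m := by
  have hs : 0 < s := hr.trans hrs
  have hDr : (0:ℝ) < ∑ m ∈ Finset.range (K + 1), r ^ m :=
    Finset.sum_pos (fun m _ => pow_pos hr m) ⟨0, Finset.mem_range.mpr (Nat.succ_pos K)⟩
  have hDs : (0:ℝ) < ∑ m ∈ Finset.range (K + 1), s ^ m :=
    Finset.sum_pos (fun m _ => pow_pos hs m) ⟨0, Finset.mem_range.mpr (Nat.succ_pos K)⟩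
  rw [div_lt_div_iff₀ hDr hDs, Finset.mul_sum, Finset.mul_sum]
  refine Finset.sum_lt_sum (fun m hm => ?_) ⟨0, Finset.mem_range.mpr (Nat.succ_pos K), ?_⟩
  · have hmK : m ≤ K := Nat.lt_succ_iff.mp (Finset.mem_range.mp hm)
    have h1 : r ^ (K - m) ≤ s ^ (K - m) := pow_le_pow_left₀ hr.le hrs.le _
    calc r ^ K * s ^ m = r ^ (K - m) * (r ^ m * s ^ m) := by
          rw [← mul_assoc, ← pow_add, Nat.sub_add_cancel hmK]
      _ ≤ s ^ (K - m) * (r ^ m * s ^ m) :=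
          mul_le_mul_of_nonneg_right h1 (by positivity)
      _ = s ^ K * r ^ m := by
          rw [show s ^ (K - m) * (r ^ m * s ^ m) = s ^ (K - m) * s ^ m * r ^ m by ring,
            ← pow_add, Nat.sub_add_cancel hmK]
  · simp only [pow_zero, mul_one, one_mul]
    exact pow_lt_pow_left₀ hrs hr.le (by omega)

private lemma Pi_bounds_aux (K : ℕ) (hK : 1 ≤ K) {r : ℝ} (hr : 0 < r) :
    0 < r ^ K / ∑ m ∈ Finset.range (K + 1), r ^ m ∧
    r ^ K / ∑ m ∈ Finset.range (K + 1), r ^ m < 1 := by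
  have hD : (0:ℝ) < ∑ m ∈ Finset.range (K + 1), r ^ m :=
    Finset.sum_pos (fun m _ => pow_pos hr m) ⟨0, Finset.mem_range.mpr (Nat.succ_pos K)⟩
  refine ⟨div_pos (pow_pos hr K) hD, ?_⟩
  rw [div_lt_one hD, Finset.sum_range_succ]
  have hpos : (0:ℝ) < ∑ m ∈ Finset.range K, r ^ m :=
    Finset.sum_pos (fun m _ => pow_pos hr m) ⟨0, Finset.mem_range.mpr (by omega)⟩
  linarith

private lemma chi_strict_mono_aux
    (c : ℝ) (hc : 0 < c) (q : ℝ) (hq0 : 0 < q) (hq1 : q < 1)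
    (K : ℕ) (hK : 1 ≤ K) (R b P : ℝ) (hR : 0 < R) (hb : 0 < b) (hP : 0 < P)
    (f ρ PiK Φ : ℝ → ℝ)
    (hf : ∀ γ : ℝ, f γ = Real.exp (-c / γ))
    (hρ : ∀ γ : ℝ, ρ γ = q * (1 - f γ) / ((1 - q) * f γ))
    (hPi : ∀ r : ℝ, PiK r = r ^ K / ∑ m ∈ Finset.range (K + 1), r ^ m)
    (hΦ : ∀ γ : ℝ, Φ γ = (1 - f γ) * PiK (ρ γ))
    {x y : ℝ} (hx : 0 < x) (hxy : x < y) :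
    R * q * (1 - Φ x) / (b + P * q * (1 - Φ x) / f x)
      < R * q * (1 - Φ y) / (b + P * q * (1 - Φ y) / f y) := by
  have hy : 0 < y := hx.trans hxy
  -- facts about f
  have hfx0 : 0 < f x := by rw [hf]; exact Real.exp_pos _
  have hfy0 : 0 < f y := by rw [hf]; exact Real.exp_pos _
  have hfx1 : f x < 1 := by
    rw [hf]; have : -c / x < 0 := div_neg_of_neg_of_pos (by linarith) hx
    exact Real.exp_lt_one_iff.mpr this
  have hfy1 : f y < 1 := by
    rw [hf]; have : -c / y < 0 := div_neg_of_neg_of_pos (by linarith) hy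
    exact Real.exp_lt_one_iff.mpr this
  have hfxy : f x < f y := by
    rw [hf, hf]
    apply Real.exp_lt_exp.mpr
    have : c / y < c / x := div_lt_div_of_pos_left hc hx hxy
    rw [neg_div, neg_div]; linarith
  have h1q : (0:ℝ) < 1 - q := by linarith
  -- facts about ρ
  have hρx0 : 0 < ρ x := by
    rw [hρ]; exact div_pos (mul_pos hq0 (by linarith)) (mul_pos h1q hfx0)
  have hρy0 : 0 < ρ y := by
    rw [hρ]; exact div_pos (mul_pos hq0 (by linarith)) (mul_pos h1q hfy0)
  have hρyx : ρ y < ρ x := by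
    rw [hρ, hρ, div_lt_div_iff₀ (mul_pos h1q hfy0) (mul_pos h1q hfx0)]
    nlinarith [mul_pos hq0 h1q, mul_lt_mul_of_pos_left hfxy (mul_pos hq0 h1q)]
  -- facts about Φ
  have hΦx0 : 0 < Φ x := by
    rw [hΦ, hPi]
    exact mul_pos (by linarith) (Pi_bounds_aux K hK hρx0).1
  have hΦy0 : 0 < Φ y := by
    rw [hΦ, hPi]
    exact mul_pos (by linarith) (Pi_bounds_aux K hK hρy0).1
  have hΦx1 : Φ x < 1 := by
    rw [hΦ, hPi]
    have h1 := (Pi_bounds_aux K hK hρx0).1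
    have h2 := (Pi_bounds_aux K hK hρx0).2
    nlinarith
  have hΦy1 : Φ y < 1 := by
    rw [hΦ, hPi]
    have h1 := (Pi_bounds_aux K hK hρy0).1
    have h2 := (Pi_bounds_aux K hK hρy0).2
    nlinarith
  have hΦyx : Φ y < Φ x := by
    rw [hΦ, hΦ, hPi, hPi]
    exact mul_lt_mul'' (by linarith) (Pi_mono_aux K hK hρy0 hρyx) (by linarith)
      (Pi_bounds_aux K hK hρy0).1.le
  -- final comparison
  have hAx : 0 < 1 - Φ x := by linarith
  have hAy : 0 < 1 - Φ y := by linarith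
  have hAxy : 1 - Φ x < 1 - Φ y := by linarith
  have hden1 : 0 < b + P * q * (1 - Φ x) / f x := by positivity
  have hden2 : 0 < b + P * q * (1 - Φ y) / f y := by positivity
  rw [div_lt_div_iff₀ hden1 hden2]
  have hinv : 1 / f y < 1 / f x := one_div_lt_one_div_of_lt hfx0 hfxy
  have hinvy : 0 < 1 / f y := by positivity
  rw [div_eq_mul_one_div (P * q * (1 - Φ x)) (f x),
    div_eq_mul_one_div (P * q * (1 - Φ y)) (f y)]
  nlinarith [mul_lt_mul_of_pos_left hAxy (mul_pos (mul_pos hR hq0) hb),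
    mul_lt_mul_of_pos_left hinv
      (mul_pos (mul_pos (mul_pos (mul_pos (mul_pos hR hq0) hP) hq0) hAx) hAy)]

/-- In the cross-layer MAC model, for a fixed own power `p_i > 0`, user `i`'s
energy-efficiency is maximal when all opponents are silent:
`χ_i(p) ≤ χ_i(p_i, 0, …, 0)`, with strict inequality whenever `Σ_{j≠i} p_j h_j > 0`. -/
theorem cross_layer_ee_max_when_opponents_silent
    (N : ℕ) (hN : 2 ≤ N) (c : ℝ) (hc : 0 < c)
    (q : ℝ) (hq0 : 0 < q) (hq1 : q < 1) (K : ℕ) (hK : 1 ≤ K)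
    (R b σ2 : ℝ) (hR : 0 < R) (hb : 0 < b) (hσ : 0 < σ2)
    (h : Fin N → ℝ) (hh : ∀ i, 0 < h i)
    (f ρ PiK Φ : ℝ → ℝ)
    (hf : ∀ γ : ℝ, f γ = Real.exp (-c / γ))
    (hρ : ∀ γ : ℝ, ρ γ = q * (1 - f γ) / ((1 - q) * f γ))
    (hPi : ∀ r : ℝ, PiK r = r ^ K / ∑ m ∈ Finset.range (K + 1), r ^ m)
    (hΦ : ∀ γ : ℝ, Φ γ = (1 - f γ) * PiK (ρ γ))
    (γfun : (Fin N → ℝ) → Fin N → ℝ)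
    (hγ : ∀ (P : Fin N → ℝ) (i : Fin N),
      γfun P i = P i * h i / (σ2 + ∑ j ∈ Finset.univ.erase i, P j * h j))
    (χ : (Fin N → ℝ) → Fin N → ℝ)
    (hχ : ∀ (P : Fin N → ℝ) (i : Fin N),
      χ P i = R * q * (1 - Φ (γfun P i)) /
        (b + P i * q * (1 - Φ (γfun P i)) / f (γfun P i)))
    (p : Fin N → ℝ) (hp : ∀ k, 0 ≤ p k) (i : Fin N) (hpi : 0 < p i) :
    χ p i ≤ χ (fun k => if k = i then p i else 0) i ∧
    (0 < ∑ j ∈ Finset.univ.erase i, p j * h j →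
      χ p i < χ (fun k => if k = i then p i else 0) i) := by
  set S := ∑ j ∈ Finset.univ.erase i, p j * h j with hSdef
  have hS0 : 0 ≤ S := Finset.sum_nonneg fun j _ => mul_nonneg (hp j) (hh j).le
  -- value of γ at the two profiles
  have hγp : γfun p i = p i * h i / (σ2 + S) := hγ p i
  have hγ0 : γfun (fun k => if k = i then p i else 0) i = p i * h i / σ2 := by
    rw [hγ]
    have hz : ∑ j ∈ Finset.univ.erase i, (if j = i then p i else 0) * h j = 0 := by
      apply Finset.sum_eq_zero
      intro j hj
      rw [if_neg (Finset.ne_of_mem_erase hj), zero_mul]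
    rw [hz, if_pos rfl, add_zero]
  have hγp0 : 0 < γfun p i := by
    rw [hγp]; exact div_pos (mul_pos hpi (hh i)) (by linarith)
  -- strict case
  have strict : 0 < S → χ p i < χ (fun k => if k = i then p i else 0) i := by
    intro hSpos
    have hlt : γfun p i < γfun (fun k => if k = i then p i else 0) i := by
      rw [hγp, hγ0]
      exact div_lt_div_of_pos_left (mul_pos hpi (hh i)) hσ (by linarith)
    rw [hχ p i, hχ (fun k => if k = i then p i else 0) i, if_pos rfl]
    exact chi_strict_mono_aux c hc q hq0 hq1 K hK R b (p i) hR hb hpi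
      f ρ PiK Φ hf hρ hPi hΦ hγp0 hlt
  refine ⟨?_, strict⟩
  rcases hS0.lt_or_eq with hSpos | hSeq
  · exact (strict hSpos).le
  · have heq : γfun p i = γfun (fun k => if k = i then p i else 0) i := by
      rw [hγp, hγ0, ← hSeq, add_zero]
    rw [hχ p i, hχ (fun k => if k = i then p i else 0) i, if_pos rfl, heq]
end

section
/- Let c > 0, K ≥ 1 an integer, R > 0, b > 0, and fix a power p > 0 and an SINR γ > 0, with f(γ) = e^{−c/γ}. Define, for each q ∈ (0,1), χ_q = R q (1 − Φ_q(γ)) / ( b + p q (1 − Φ_q(γ))/f(γ) ) where Φ_q(γ) = (1 − f(γ))Π_K(ρ_q(γ)), ρ_q(γ) = q(1 − f(γ))/((1 − q)f(γ)) and Π_K(ρ) = ρ^K/Σ_{j=0}^{K} ρ^j. Then χ_q → R f(γ)/(b + p) as q → 1⁻; i.e., the generalized cross-layer energy-efficiency reduces to the conventional energy-efficiency Rf(γ)/(b + p) in the limit q → 1. -/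
/-- The generalized cross-layer energy-efficiency
`χ_q = Rq(1 - Φ_q(γ))/(b + pq(1 - Φ_q(γ))/f(γ))` reduces to the conventional
energy-efficiency `Rf(γ)/(b + p)` in the limit `q → 1⁻`. -/
theorem cross_layer_ee_limit_q_to_one (c γ R b p : ℝ)
    (hc : 0 < c) (hγ : 0 < γ) (hR : 0 < R) (hb : 0 < b) (hp : 0 < p)
    (K : ℕ) (hK : 1 ≤ K)
    (f : ℝ) (hf : f = Real.exp (-c / γ))
    (ρ : ℝ → ℝ) (hρ : ∀ q : ℝ, ρ q = q * (1 - f) / ((1 - q) * f))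
    (PiK : ℝ → ℝ) (hPi : ∀ r : ℝ, PiK r = r ^ K / ∑ j ∈ Finset.range (K + 1), r ^ j)
    (Φ : ℝ → ℝ) (hΦ : ∀ q : ℝ, Φ q = (1 - f) * PiK (ρ q))
    (χ : ℝ → ℝ)
    (hχ : ∀ q : ℝ, χ q = R * q * (1 - Φ q) / (b + p * q * (1 - Φ q) / f)) :
    Filter.Tendsto χ (nhdsWithin 1 (Set.Iio 1)) (nhds (R * f / (b + p))) := by
  have hf0 : 0 < f := hf ▸ Real.exp_pos _
  have hf1 : f < 1 := by
    rw [hf]; exact Real.exp_lt_one_iff.mpr (div_neg_of_neg_of_pos (neg_lt_zero.mpr hc) hγ)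
  set S : ℝ → ℝ := fun q => ∑ j ∈ Finset.range (K + 1),
    (q * (1 - f)) ^ j * ((1 - q) * f) ^ (K - j) with hS
  set g : ℝ → ℝ := fun q => (q * (1 - f)) ^ K / S q with hg
  set h : ℝ → ℝ := fun q =>
    R * q * (1 - (1 - f) * g q) / (b + p * q * (1 - (1 - f) * g q) / f) with hh
  have hS1 : S 1 = (1 - f) ^ K := by
    have e : S 1 = ∑ j ∈ Finset.range (K + 1),
        ((1:ℝ) * (1 - f)) ^ j * (((1:ℝ) - 1) * f) ^ (K - j) := rfl
    rw [e, Finset.sum_eq_single K]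
    · simp
    · intro j hj hjK
      have : 0 < K - j := Nat.sub_pos_of_lt (lt_of_le_of_ne
        (Nat.lt_succ_iff.mp (Finset.mem_range.mp hj)) hjK)
      simp [zero_pow this.ne']
    · intro hK'; exact absurd (Finset.self_mem_range_succ K) hK'
  have h1f : (0:ℝ) < 1 - f := by linarith
  have hS1ne : S 1 ≠ 0 := by rw [hS1]; positivity
  have hg1 : g 1 = 1 := by
    rw [hg]; simp only [one_mul, hS1]; exact div_self (by positivity)
  -- continuity of h at 1
  have hScont : Continuous S := by
    apply continuous_finset_sum; intro j _; fun_prop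
  have hgcont : ContinuousAt g 1 := by
    exact ContinuousAt.div (by fun_prop) hScont.continuousAt hS1ne
  have hx1 : (1 : ℝ) - (1 - f) * g 1 = f := by rw [hg1]; ring
  have hden1 : b + p * 1 * (1 - (1 - f) * g 1) / f ≠ 0 := by
    rw [hx1]; rw [mul_one, mul_div_assoc, div_self hf0.ne', mul_one]; positivity
  have hhcont : ContinuousAt h 1 := by
    apply ContinuousAt.div
    · fun_prop
    · fun_prop
    · exact hden1
  have hh1 : h 1 = R * f / (b + p) := by
    rw [hh]; simp only [hx1, mul_one]
    rw [mul_div_assoc p, div_self hf0.ne', mul_one]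
  have htend : Filter.Tendsto h (nhdsWithin 1 (Set.Iio 1)) (nhds (R * f / (b + p))) := by
    rw [← hh1]
    exact hhcont.continuousWithinAt.tendsto
  refine Filter.Tendsto.congr' ?_ htend
  have hmem : Set.Ioo (0:ℝ) 1 ∈ nhdsWithin 1 (Set.Iio 1) :=
    Ioo_mem_nhdsLT_of_mem (by constructor <;> norm_num)
  filter_upwards [hmem] with q hq
  obtain ⟨hq0, hq1⟩ := hq
  have hd : (0:ℝ) < (1 - q) * f := by
    have : (0:ℝ) < 1 - q := by linarith
    positivity
  have hn : (0:ℝ) < q * (1 - f) := by positivity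
  have hSq : 0 < S q := by
    apply Finset.sum_pos
    · intro j hj; positivity
    · exact ⟨K, Finset.self_mem_range_succ K⟩
  -- key: PiK (ρ q) = g q
  have hsum : (∑ j ∈ Finset.range (K + 1), (ρ q) ^ j) * ((1 - q) * f) ^ K = S q := by
    rw [Finset.sum_mul]
    apply Finset.sum_congr rfl
    intro j hj
    have hjK : j ≤ K := Nat.lt_succ_iff.mp (Finset.mem_range.mp hj)
    rw [hρ q, div_pow, div_mul_eq_mul_div, pow_sub₀ _ hd.ne' hjK]
    field_simp
  have hkey : PiK (ρ q) = g q := by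
    rw [hPi, hρ q, hg]
    have hdK : ((1 - q) * f) ^ K ≠ 0 := by positivity
    rw [div_pow]
    rw [show (∑ j ∈ Finset.range (K + 1), (q * (1 - f) / ((1 - q) * f)) ^ j)
        = S q / ((1 - q) * f) ^ K by
      rw [eq_div_iff hdK, ← hsum]
      congr 1
      apply Finset.sum_congr rfl
      intro j _; rw [hρ q]]
    show _ = (q * (1 - f)) ^ K / S q
    rw [div_div_div_eq]
    rw [mul_comm ((q * (1 - f)) ^ K), mul_div_mul_left _ _ hdK]
  rw [hh, hχ q, hΦ q, hkey]
end
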